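/- Let M be an optimal GK-model in which all instances of □φ → □□φ and ◇◇φ → ◇φ are valid. Then S is fuzzy-transitive: min(S(x,y), S(y,z)) ≤ S(x,z) for all x,y,z ∈ W. -/

import Mathlib

open scoped Classical

noncomputable def gimp (a b : ℝ) : ℝ := if a ≤ b then 1 else b

inductive GForm : Type where
  | bot : GForm
  | var : ℕ → GForm
  | and : GForm → GForm → GForm
  | or : GForm → GForm → GForm
  | imp : GForm → GForm → GForm
  | box : GForm → GForm
  | dia : GForm → GForm

def GForm.neg (φ : GForm) : GForm := φ.imp .bot

noncomputable def ev {W : Type} (S : W → W → ℝ) (e : ℕ → W → ℝ) : GForm → W → ℝ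
  | .bot, _ => 0
  | .var p, x => e p x
  | .and φ ψ, x => min (ev S e φ x) (ev S e ψ x)
  | .or φ ψ, x => max (ev S e φ x) (ev S e ψ x)
  | .imp φ ψ, x => gimp (ev S e φ x) (ev S e ψ x)
  | .box φ, x => ⨅ y, gimp (S x y) (ev S e φ y)
  | .dia φ, x => ⨆ y, min (S x y) (ev S e φ y)

noncomputable def Splus {W : Type} (S : W → W → ℝ) (e : ℕ → W → ℝ) (x y : W) : ℝ :=
  min (⨅ φ : GForm, gimp (ev S e (.box φ) x) (ev S e φ y))
      (⨅ φ : GForm, gimp (ev S e φ y) (ev S e (.dia φ) x))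

/-! By Gödel residuation, in an optimal model `m ≤ S x z` holds iff `min m (□φ)(x) ≤ φ(z)` and
`min m φ(z) ≤ (◇φ)(x)` for every `φ`. For `m = min (S x y) (S y z)` both follow by passing through
`y`: axiom 4 turns `□φ` at `x` into `□□φ`, which yields `□φ` at `y` to degree `S x y` and then `φ`
at `z` to degree `S y z`; dually `φ` at `z` yields `◇φ` at `y`, then `◇◇φ ≤ ◇φ` at `x`. -/

instance : Nonempty GForm := ⟨.bot⟩

lemma gimp_nonneg {a b : ℝ} (hb : 0 ≤ b) : 0 ≤ gimp a b := by
  unfold gimp; split <;> linarith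

lemma gimp_le_one {a b : ℝ} (hb : b ≤ 1) : gimp a b ≤ 1 := by
  unfold gimp; split <;> linarith

lemma le_gimp_iff {s a b : ℝ} (hs : s ≤ 1) : s ≤ gimp a b ↔ min s a ≤ b := by
  unfold gimp
  split_ifs with hab
  · exact iff_of_true hs ((min_le_right s a).trans hab)
  · constructor
    · exact fun h => (min_le_left s a).trans h
    · intro h
      rcases min_le_iff.1 h with h | h
      · exact h
      · linarith

lemma le_of_gimp_eq_one {a b : ℝ} (ha : a ≤ 1) (h : gimp a b = 1) : a ≤ b := by
  unfold gimp at h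
  split_ifs at h with hab
  · exact hab
  · linarith

section

variable {W : Type} {S : W → W → ℝ} {e : ℕ → W → ℝ}

lemma ev_mem_Icc (hS : ∀ x y, S x y ∈ Set.Icc (0:ℝ) 1) (he : ∀ p x, e p x ∈ Set.Icc (0:ℝ) 1) :
    ∀ (φ : GForm) (x : W), ev S e φ x ∈ Set.Icc (0:ℝ) 1 := by
  intro φ x
  have : Nonempty W := ⟨x⟩
  induction φ generalizing x with
  | bot => simp [ev]
  | var p => exact he p x
  | and φ ψ ih₁ ih₂ => exact ⟨le_min (ih₁ x).1 (ih₂ x).1, (min_le_left _ _).trans (ih₁ x).2⟩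
  | or φ ψ ih₁ ih₂ => exact ⟨(ih₁ x).1.trans (le_max_left _ _), max_le (ih₁ x).2 (ih₂ x).2⟩
  | imp φ ψ _ ih => exact ⟨gimp_nonneg (ih x).1, gimp_le_one (ih x).2⟩
  | box φ ih =>
    have hbdd : BddBelow (Set.range fun y => gimp (S x y) (ev S e φ y)) :=
      ⟨0, Set.forall_mem_range.2 fun y => gimp_nonneg (ih y).1⟩
    exact ⟨le_ciInf fun y => gimp_nonneg (ih y).1, ciInf_le_of_le hbdd x (gimp_le_one (ih x).2)⟩
  | dia φ ih =>
    have hbdd : BddAbove (Set.range fun y => min (S x y) (ev S e φ y)) :=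
      ⟨1, Set.forall_mem_range.2 fun y => (min_le_right _ _).trans (ih y).2⟩
    exact ⟨le_ciSup_of_le hbdd x (le_min (hS x x).1 (ih x).1),
      ciSup_le fun y => (min_le_right _ _).trans (ih y).2⟩

lemma le_of_ev_imp_eq_one (hS : ∀ x y, S x y ∈ Set.Icc (0:ℝ) 1)
    (he : ∀ p x, e p x ∈ Set.Icc (0:ℝ) 1) {φ ψ : GForm} {x : W}
    (h : ev S e (.imp φ ψ) x = 1) : ev S e φ x ≤ ev S e ψ x :=
  le_of_gimp_eq_one (ev_mem_Icc hS he φ x).2 h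

lemma le_Splus_iff (hS : ∀ x y, S x y ∈ Set.Icc (0:ℝ) 1) (he : ∀ p x, e p x ∈ Set.Icc (0:ℝ) 1)
    {x z : W} {m : ℝ} (hm : m ≤ 1) :
    m ≤ Splus S e x z ↔ ∀ φ : GForm,
      min m (ev S e (.box φ) x) ≤ ev S e φ z ∧ min m (ev S e φ z) ≤ ev S e (.dia φ) x := by
  have hev := ev_mem_Icc hS he
  have hbdd_box : BddBelow (Set.range fun φ => gimp (ev S e (.box φ) x) (ev S e φ z)) :=
    ⟨0, Set.forall_mem_range.2 fun φ => gimp_nonneg (hev φ z).1⟩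
  have hbdd_dia : BddBelow (Set.range fun φ => gimp (ev S e φ z) (ev S e (.dia φ) x)) :=
    ⟨0, Set.forall_mem_range.2 fun φ => gimp_nonneg (hev (.dia φ) x).1⟩
  rw [Splus, le_min_iff, le_ciInf_iff hbdd_box, le_ciInf_iff hbdd_dia, ← forall_and]
  simp only [le_gimp_iff hm]

end

theorem stmt12_general (W : Type) (S : W → W → ℝ) (e : ℕ → W → ℝ)
    (hS : ∀ x y, S x y ∈ Set.Icc (0:ℝ) 1) (he : ∀ p x, e p x ∈ Set.Icc (0:ℝ) 1)
    (hopt : ∀ x y, S x y = Splus S e x y)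
    (h4 : ∀ (φ : GForm) (x : W), ev S e (.imp (.box φ) (.box (.box φ))) x = 1 ∧
      ev S e (.imp (.dia (.dia φ)) (.dia φ)) x = 1) :
    ∀ x y z, min (S x y) (S y z) ≤ S x z := by
  intro x y z
  have hstep : ∀ u v φ, min (S u v) (ev S e (.box φ) u) ≤ ev S e φ v ∧
      min (S u v) (ev S e φ v) ≤ ev S e (.dia φ) u :=
    fun u v => (le_Splus_iff hS he (hS u v).2).1 (hopt u v).le
  rw [hopt x z, le_Splus_iff hS he ((min_le_left _ _).trans (hS x y).2)]
  intro φ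
  constructor
  · calc min (min (S x y) (S y z)) (ev S e (.box φ) x)
        = min (S y z) (min (S x y) (ev S e (.box φ) x)) := by rw [min_assoc, min_left_comm]
      _ ≤ min (S y z) (min (S x y) (ev S e (.box (.box φ)) x)) := by
        gcongr; exact le_of_ev_imp_eq_one hS he (h4 φ x).1
      _ ≤ min (S y z) (ev S e (.box φ) y) := by gcongr; exact (hstep x y _).1
      _ ≤ ev S e φ z := (hstep y z φ).1
  · calc min (min (S x y) (S y z)) (ev S e φ z)
        = min (S x y) (min (S y z) (ev S e φ z)) := min_assoc _ _ _
      _ ≤ min (S x y) (ev S e (.dia φ) y) := by gcongr; exact (hstep y z φ).2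
      _ ≤ ev S e (.dia (.dia φ)) x := (hstep x y _).2
      _ ≤ ev S e (.dia φ) x := le_of_ev_imp_eq_one hS he (h4 φ x).2

theorem stmt12 (W : Type) [Nonempty W] (S : W → W → ℝ) (e : ℕ → W → ℝ)
    (hS : ∀ x y, S x y ∈ Set.Icc (0:ℝ) 1) (he : ∀ p x, e p x ∈ Set.Icc (0:ℝ) 1)
    (hopt : ∀ x y, S x y = Splus S e x y)
    (h4 : ∀ (φ : GForm) (x : W), ev S e (.imp (.box φ) (.box (.box φ))) x = 1 ∧
      ev S e (.imp (.dia (.dia φ)) (.dia φ)) x = 1) :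
    ∀ x y z, min (S x y) (S y z) ≤ S x z :=
  stmt12_general W S e hS he hopt h4
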